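/- arXiv:1404.1992 — 7 statements merged into one kernel-verified Lean document; each statement's English description precedes it below -/
import Mathlib

section
/- Let I be a finite graph on vertex set V of size n and let D ⊆ V be nonempty such that every vertex of D is adjacent in I to every vertex of V \ D. Then the interference index of D with respect to I equals ⌈log₂(n+1)⌉. -/
/-!
An injective labelling by nonempty subsets of `X` exists iff `n ≤ 2 ^ |X| - 1`, which gives the
lower bound. For the upper bound, label the vertices by distinct nonempty subsets of a ground set
of size `⌈log₂ (n + 1)⌉` so that a chosen `d ∈ D` receives the whole ground set: every label meets
`f d`, and `d` is adjacent to every vertex outside `D`.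
-/

open Function

open Classical in
lemma Fintype.card_subtype_set_nonempty (β : Type*) [Fintype β] :
    Fintype.card {s : Set β // s.Nonempty} = 2 ^ Fintype.card β - 1 := by
  simp only [Set.nonempty_iff_ne_empty]
  rw [Fintype.card_subtype_compl, Fintype.card_subtype_eq, Fintype.card_set]

lemma card_add_one_le_two_pow_of_injective {α β : Type*} [Fintype α] [Fintype β]
    {f : α → Set β} (hf : Injective f) (hne : ∀ a, (f a).Nonempty) :
    Fintype.card α + 1 ≤ 2 ^ Fintype.card β := by
  classical
  have hcard := Fintype.card_le_of_injective
    (fun a => (⟨f a, hne a⟩ : {s : Set β // s.Nonempty})) fun a b h => hf (congrArg Subtype.val h)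
  rw [Fintype.card_subtype_set_nonempty] at hcard
  have := Nat.one_le_two_pow (n := Fintype.card β)
  omega

lemma exists_injective_nonempty_apply_eq_univ {α β : Type*} [Fintype α] [Fintype β]
    (h : Fintype.card α + 1 ≤ 2 ^ Fintype.card β) (d : α) :
    ∃ f : α → Set β, Injective f ∧ (∀ a, (f a).Nonempty) ∧ f d = Set.univ := by
  classical
  have hα : 0 < Fintype.card α := Fintype.card_pos_iff.mpr ⟨d⟩
  have : Nonempty β := Fintype.card_pos_iff.mp <| Nat.pos_of_ne_zero fun h0 => by
    rw [h0, pow_zero] at h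
    omega
  have hcard : Fintype.card α ≤ Fintype.card {s : Set β // s.Nonempty} := by
    rw [Fintype.card_subtype_set_nonempty]
    omega
  obtain ⟨g⟩ := Embedding.nonempty_of_card_le hcard
  let e := Equiv.swap (g d) ⟨Set.univ, Set.univ_nonempty⟩
  refine ⟨fun a => (e (g a)).val, Subtype.val_injective.comp (e.injective.comp g.injective),
    fun a => (e (g a)).2, ?_⟩
  simp [e]

theorem stmt7 {V : Type*} [Fintype V] (I : SimpleGraph V) (D : Set V)
    (hD : D.Nonempty) (hadj : ∀ v ∈ D, ∀ u ∉ D, I.Adj v u) :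
    IsLeast {m : ℕ | ∃ f : V → Set (Fin m),
        Function.Injective f ∧ (∀ v, (f v).Nonempty) ∧
        ∀ u ∉ D, ∃ v ∈ D, I.Adj u v ∧ (f u ∩ f v).Nonempty}
      (Nat.clog 2 (Fintype.card V + 1)) := by
  obtain ⟨d, hd⟩ := hD
  constructor
  · have hle : Fintype.card V + 1 ≤ 2 ^ Fintype.card (Fin (Nat.clog 2 (Fintype.card V + 1))) := by
      rw [Fintype.card_fin]
      exact Nat.le_pow_clog one_lt_two _
    obtain ⟨f, hinj, hne, hfd⟩ := exists_injective_nonempty_apply_eq_univ hle d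
    refine ⟨f, hinj, hne, fun u hu => ⟨d, hd, (hadj d hd u hu).symm, ?_⟩⟩
    rw [hfd, Set.inter_univ]
    exact hne u
  · rintro k ⟨f, hinj, hne, -⟩
    have hle := card_add_one_le_two_pow_of_injective hinj hne
    rw [Fintype.card_fin] at hle
    exact (Nat.clog_le_iff_le_pow one_lt_two).mpr hle
end

section
/- Let G be a finite graph on V and ∅ ≠ D ⊆ V. The open neighborhood function N is an interference of D with respect to the complete graph on V if and only if N is injective, G has no isolated vertices, and for every u ∈ V \ D: (a) d(u, D) ≤ 2, and (b) if no vertex of D is at distance exactly 2 from u, then there exists v ∈ D ∩ N(u) such that the edge uv lies in a triangle of G. -/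
theorem stmt9 {V : Type*} [Fintype V] (G : SimpleGraph V) (D : Set V)
    (hD : D.Nonempty) :
    (Function.Injective G.neighborSet ∧ (∀ v, (G.neighborSet v).Nonempty) ∧
      ∀ u ∉ D, ∃ v ∈ D, v ≠ u ∧ (G.neighborSet u ∩ G.neighborSet v).Nonempty)
    ↔
    (Function.Injective G.neighborSet ∧ (∀ v, (G.neighborSet v).Nonempty) ∧
      ∀ u ∉ D,
        -- (a) d(u, D) ≤ 2
        (∃ v ∈ D, u = v ∨ G.Adj u v ∨ ∃ w, G.Adj u w ∧ G.Adj w v) ∧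
        -- (b) if no vertex of D is at distance exactly 2 from u,
        --     then some v ∈ D ∩ N(u) forms a triangle with u
        ((¬ ∃ v ∈ D, u ≠ v ∧ ¬ G.Adj u v ∧ ∃ w, G.Adj u w ∧ G.Adj w v) →
          ∃ v ∈ D, G.Adj u v ∧ ∃ w, G.Adj u w ∧ G.Adj v w)) := by
  constructor
  · rintro ⟨hinj, hiso, h⟩
    refine ⟨hinj, hiso, fun u hu => ?_⟩
    obtain ⟨v, hvD, hvu, w, hwu, hwv⟩ := h u hu
    constructor
    · exact ⟨v, hvD, Or.inr (Or.inr ⟨w, hwu, G.adj_symm hwv⟩)⟩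
    · intro hne
      by_cases hadj : G.Adj u v
      · exact ⟨v, hvD, hadj, w, hwu, hwv⟩
      · exact absurd ⟨v, hvD, Ne.symm hvu, hadj, w, hwu, G.adj_symm hwv⟩ hne
  · rintro ⟨hinj, hiso, h⟩
    refine ⟨hinj, hiso, fun u hu => ?_⟩
    obtain ⟨_, hb⟩ := h u hu
    by_cases hd : ∃ v ∈ D, u ≠ v ∧ ¬ G.Adj u v ∧ ∃ w, G.Adj u w ∧ G.Adj w v
    · obtain ⟨v, hvD, hvu, _, w, hwu, hwv⟩ := hd
      exact ⟨v, hvD, Ne.symm hvu, w, hwu, G.adj_symm hwv⟩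
    · obtain ⟨v, hvD, hadj, w, hwu, hwv⟩ := hb hd
      exact ⟨v, hvD, fun e => G.irrefl (e ▸ hadj), w, hwu, hwv⟩
end

section
/- For a finite graph G on vertex set V with |V| ≥ 2 and a vertex v, the open neighborhood function N is an interference of {v} with respect to the complete graph if and only if N is injective with nonempty values, d(u, v) ≤ 2 for every u ∈ V, and the induced subgraph of G on N(v) has no isolated vertices. -/
theorem stmt10 {V : Type*} [Fintype V] (G : SimpleGraph V)
    (hV : 2 ≤ Fintype.card V) (v : V) :
    (Function.Injective G.neighborSet ∧ (∀ u, (G.neighborSet u).Nonempty) ∧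
      ∀ u, u ≠ v → (G.neighborSet u ∩ G.neighborSet v).Nonempty)
    ↔
    (Function.Injective G.neighborSet ∧ (∀ u, (G.neighborSet u).Nonempty) ∧
      (∀ u : V, u = v ∨ G.Adj u v ∨ ∃ w, G.Adj u w ∧ G.Adj w v) ∧
      ∀ u ∈ G.neighborSet v, ∃ w ∈ G.neighborSet v, G.Adj u w) := by
  simp only [Set.Nonempty, Set.mem_inter_iff, SimpleGraph.mem_neighborSet]
  constructor
  · rintro ⟨hinj, hne, hcom⟩
    refine ⟨hinj, hne, ?_, ?_⟩
    · intro u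
      by_cases hu : u = v
      · exact Or.inl hu
      · obtain ⟨w, hw1, hw2⟩ := hcom u hu
        exact Or.inr (Or.inr ⟨w, hw1, hw2.symm⟩)
    · intro u hu
      have huv : u ≠ v := (G.ne_of_adj hu).symm
      obtain ⟨w, hw1, hw2⟩ := hcom u huv
      exact ⟨w, hw2, hw1⟩
  · rintro ⟨hinj, hne, hdist, hiso⟩
    refine ⟨hinj, hne, ?_⟩
    intro u hu
    rcases hdist u with h | h | ⟨w, hw1, hw2⟩
    · exact absurd h hu
    · obtain ⟨w, hw1, hw2⟩ := hiso u h.symm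
      exact ⟨w, hw2, hw1⟩
    · exact ⟨w, hw1, hw2.symm⟩
end

section
/- Let G be a finite connected graph, v a vertex, and D = V \ {v}. The open neighborhood function N is an interference of D with respect to the complete graph if and only if N is injective, G has no isolated vertices, and v has a neighbor of degree at least two. -/
theorem stmt12 {V : Type*} [Fintype V] [DecidableEq V] (G : SimpleGraph V)
    [DecidableRel G.Adj] (hconn : G.Connected) (hV : 2 ≤ Fintype.card V) (v : V) :
    (Function.Injective G.neighborSet ∧ (∀ u, (G.neighborSet u).Nonempty) ∧
      ∀ u, u ∉ (({v}ᶜ : Set V)) → ∃ w ∈ ({v}ᶜ : Set V), w ≠ u ∧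
        (G.neighborSet u ∩ G.neighborSet w).Nonempty)
    ↔
    (Function.Injective G.neighborSet ∧ (∀ u, (G.neighborSet u).Nonempty) ∧
      ∃ u, G.Adj v u ∧ 2 ≤ G.degree u) := by
  refine and_congr_right fun _ => and_congr_right fun _ => ⟨fun h => ?_, fun h => ?_⟩
  · obtain ⟨w, hw, hwv, x, hx1, hx2⟩ := h v (by simp)
    simp only [Set.mem_compl_iff, Set.mem_singleton_iff] at hw
    refine ⟨x, hx1, ?_⟩
    have : ({v, w} : Finset V) ⊆ G.neighborFinset x := by
      intro y hy
      simp only [Finset.mem_insert, Finset.mem_singleton] at hy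
      rcases hy with rfl | rfl
      · exact (G.mem_neighborFinset _ _).2 hx1.symm
      · exact (G.mem_neighborFinset _ _).2 hx2.symm
    calc 2 = ({v, w} : Finset V).card := by rw [Finset.card_pair (Ne.symm hwv)]
      _ ≤ _ := Finset.card_le_card this
    -- note hwv : w ≠ v
  · obtain ⟨u, huv, hdeg⟩ := h
    intro x hx
    simp only [Set.mem_compl_iff, Set.mem_singleton_iff, not_not] at hx
    subst hx
    obtain ⟨w, hw, hwv⟩ := Finset.exists_mem_ne (by rw [G.card_neighborFinset_eq_degree]; omega : 1 < (G.neighborFinset u).card) x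
    rw [G.mem_neighborFinset] at hw
    refine ⟨w, by simpa using hwv, hwv, u, huv, hw.symm⟩
end

section
/- Let G be a finite graph on V and ∅ ≠ D ⊆ V. The complemented neighborhood function N̄(u) = V \ N(u) is an interference of D with respect to the complete graph on V if and only if N̄ is injective and every vertex u ∉ D that is adjacent to all vertices of D has a nonneighbor w ≠ u that is not adjacent to all vertices of D. -/
theorem stmt14 {V : Type*} [Fintype V] (G : SimpleGraph V) (D : Set V)
    (hD : D.Nonempty) :
    (Function.Injective (fun u => (G.neighborSet u)ᶜ) ∧
      ∀ u ∉ D, ∃ v ∈ D, v ≠ u ∧ ((G.neighborSet u)ᶜ ∩ (G.neighborSet v)ᶜ).Nonempty)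
    ↔
    (Function.Injective (fun u => (G.neighborSet u)ᶜ) ∧
      ∀ u ∉ D, (∀ v ∈ D, G.Adj u v) →
        ∃ w : V, w ≠ u ∧ ¬ G.Adj u w ∧ ∃ v ∈ D, ¬ G.Adj w v) := by
  constructor
  · rintro ⟨hinj, h⟩
    refine ⟨hinj, fun u hu hadj => ?_⟩
    obtain ⟨v, hv, hvu, x, hx1, hx2⟩ := h u hu
    simp only [Set.mem_compl_iff, SimpleGraph.mem_neighborSet] at hx1 hx2
    have hxu : x ≠ u := by
      rintro rfl
      exact hx2 ((hadj v hv).symm)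
    exact ⟨x, hxu, hx1, v, hv, fun hc => hx2 hc.symm⟩
  · rintro ⟨hinj, h⟩
    refine ⟨hinj, fun u hu => ?_⟩
    by_cases hadj : ∀ v ∈ D, G.Adj u v
    · obtain ⟨w, hwu, hw1, v, hv, hw2⟩ := h u hu hadj
      have hvu : v ≠ u := fun hc => hu (hc ▸ hv)
      refine ⟨v, hv, hvu, w, ?_, ?_⟩ <;>
        simp only [Set.mem_compl_iff, SimpleGraph.mem_neighborSet]
      · exact hw1
      · exact fun hc => hw2 hc.symm
    · push_neg at hadj
      obtain ⟨v, hv, hnadj⟩ := hadj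
      have hvu : v ≠ u := fun hc => hu (hc ▸ hv)
      refine ⟨v, hv, hvu, u, ?_, ?_⟩ <;>
        simp only [Set.mem_compl_iff, SimpleGraph.mem_neighborSet]
      · exact G.irrefl
      · exact fun hc => hnadj hc.symm
end

section
/- For the cycle graph C_n, the complemented neighborhood function N̄ is a complete interference if and only if n ≥ 5. -/
/-!
The neighbourhood of `u` in `C_n` is `{u - 1, u + 1}`. For `n ≥ 5` these pairs determine `u`,
because two distinct vertices with the same pair would force `4 = 0` in `ℤ/n`, and two such pairs
cover at most four of the `n` vertices, so their complements meet. For `n = 3` the complements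
`N̄(u) = {u}` are pairwise disjoint, and for `n = 4` opposite vertices have the same neighbours.
-/

open Function

theorem pair_sub_add_injective {G : Type*} [AddCommGroup G] {g : G} (hg : 4 • g ≠ 0) :
    Injective fun a : G => ({a - g, a + g} : Set G) := by
  intro a b h
  have hsub : a - g = b - g ∨ a - g = b + g := by
    simpa using h.subset (Set.mem_insert (a - g) {a + g})
  have hadd : a + g = b - g ∨ a + g = b + g := by
    simpa using h.subset (Set.mem_insert_of_mem (a - g) rfl)
  rcases hsub with hsub | hsub
  · exact sub_left_injective hsub
  rcases hadd with hadd | hadd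
  · exact absurd (by linear_combination (norm := abel) hadd - hsub) hg
  · exact add_left_injective g hadd

namespace SimpleGraph

theorem compl_neighborSet_inter_nonempty {V : Type*} [Fintype V] [DecidableEq V]
    (G : SimpleGraph V) [G.LocallyFinite] {u v : V}
    (h : G.degree u + G.degree v < Fintype.card V) :
    ((G.neighborSet u)ᶜ ∩ (G.neighborSet v)ᶜ).Nonempty := by
  have hcard : (G.neighborFinset u ∪ G.neighborFinset v).card < (Finset.univ : Finset V).card :=
    (Finset.card_union_le _ _).trans_lt h
  obtain ⟨w, -, hw⟩ := Finset.exists_mem_notMem_of_card_lt_card hcard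
  simp only [Finset.mem_union, mem_neighborFinset, not_or] at hw
  exact ⟨w, hw⟩

theorem cycleGraph_neighborSet_injective {n : ℕ} (hn : 5 ≤ n) :
    Injective (cycleGraph n).neighborSet := by
  obtain ⟨m, rfl⟩ := Nat.exists_eq_add_of_le' (by omega : 2 ≤ n)
  have h4 : 4 • (1 : Fin (m + 2)) ≠ 0 := by
    open Fin.CommRing in rw [nsmul_one, ne_eq, Fin.natCast_eq_zero]
    exact Nat.not_dvd_of_pos_of_lt (by norm_num) (by omega)
  intro u v h
  exact pair_sub_add_injective h4 (by simpa only [cycleGraph_neighborSet] using h)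

theorem cycleGraph_compl_neighborSet_inter_nonempty {n : ℕ} (hn : 5 ≤ n) (u v : Fin n) :
    (((cycleGraph n).neighborSet u)ᶜ ∩ ((cycleGraph n).neighborSet v)ᶜ).Nonempty := by
  obtain ⟨m, rfl⟩ := Nat.exists_eq_add_of_le' (by omega : 3 ≤ n)
  apply compl_neighborSet_inter_nonempty
  rw [cycleGraph_degree_three_le, cycleGraph_degree_three_le, Fintype.card_fin]
  omega

theorem cycleGraph_three_compl_neighborSet_zero_inter_one :
    ((cycleGraph 3).neighborSet 0)ᶜ ∩ ((cycleGraph 3).neighborSet 1)ᶜ = ∅ := by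
  simp [cycleGraph_three_eq_top, neighborSet_top]

theorem cycleGraph_four_neighborSet_zero_eq_two :
    (cycleGraph 4).neighborSet 0 = (cycleGraph 4).neighborSet 2 := by
  ext w
  fin_cases w <;> decide

end SimpleGraph

theorem stmt16 (n : ℕ) (hn : 3 ≤ n) :
    (Function.Injective (fun u => ((SimpleGraph.cycleGraph n).neighborSet u)ᶜ) ∧
      (∀ u : Fin n, (((SimpleGraph.cycleGraph n).neighborSet u)ᶜ : Set (Fin n)).Nonempty) ∧
      ∀ u v : Fin n, u ≠ v →
        (((SimpleGraph.cycleGraph n).neighborSet u)ᶜ ∩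
          ((SimpleGraph.cycleGraph n).neighborSet v)ᶜ).Nonempty)
    ↔ 5 ≤ n := by
  constructor
  · rintro ⟨hinj, -, hmeet⟩
    by_contra! hlt
    interval_cases n
    · have h01 := hmeet 0 1 (by decide)
      rw [SimpleGraph.cycleGraph_three_compl_neighborSet_zero_inter_one] at h01
      exact Set.not_nonempty_empty h01
    · exact absurd (hinj (congrArg compl SimpleGraph.cycleGraph_four_neighborSet_zero_eq_two))
        (by decide : (0 : Fin 4) ≠ 2)
  · intro hn5
    exact ⟨compl_injective.comp (SimpleGraph.cycleGraph_neighborSet_injective hn5),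
      fun u => ⟨u, (SimpleGraph.cycleGraph n).notMem_neighborSet_self⟩,
      fun u v _ => SimpleGraph.cycleGraph_compl_neighborSet_inter_nonempty hn5 u v⟩
end

section
/- Let G be a finite graph in which the sum of degrees of any two vertices at distance 2 is at most n, and the sum of degrees of any two other distinct vertices is strictly less than n, where n = |V|. If the neighborhood function is injective, then N̄(u) = V \ N(u) is a complete interference. -/
theorem stmt18 {V : Type*} [Fintype V] [DecidableEq V] (G : SimpleGraph V)
    [DecidableRel G.Adj]
    (hdist2 : ∀ u v : V, u ≠ v → ¬ G.Adj u v → (∃ w, G.Adj u w ∧ G.Adj w v) →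
      G.degree u + G.degree v ≤ Fintype.card V)
    (hother : ∀ u v : V, u ≠ v →
      ¬ (¬ G.Adj u v ∧ ∃ w, G.Adj u w ∧ G.Adj w v) →
      G.degree u + G.degree v < Fintype.card V)
    (hinj : Function.Injective G.neighborSet) :
    Function.Injective (fun u => (G.neighborSet u)ᶜ) ∧
      (∀ u, ((G.neighborSet u)ᶜ : Set V).Nonempty) ∧
      ∀ u v : V, u ≠ v →
        ((G.neighborSet u)ᶜ ∩ (G.neighborSet v)ᶜ).Nonempty := by
  refine ⟨fun a b h => hinj (compl_injective h), fun u => ⟨u, ?_⟩, ?_⟩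
  · simp [SimpleGraph.mem_neighborSet]
  · intro u v huv
    by_contra h
    rw [Set.not_nonempty_iff_eq_empty, ← Set.compl_union,
      Set.compl_empty_iff] at h
    -- u is in the union, but not in N u, so Adj v u
    have hu : u ∈ G.neighborSet u ∪ G.neighborSet v := by rw [h]; trivial
    have hadj : G.Adj u v := by
      rcases hu with hu | hu
      · exact absurd hu (by simp)
      · exact (SimpleGraph.mem_neighborSet _ _ _).1 hu |>.symm
    have hlt := hother u v huv (by tauto)
    have hfin : G.neighborFinset u ∪ G.neighborFinset v = Finset.univ := by
      ext x
      have : x ∈ G.neighborSet u ∪ G.neighborSet v := by rw [h]; trivial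
      simpa [SimpleGraph.mem_neighborFinset] using this
    have hle : Fintype.card V ≤ G.degree u + G.degree v := by
      rw [← Finset.card_univ, ← hfin, SimpleGraph.degree, SimpleGraph.degree]
      exact Finset.card_union_le _ _
    omega
end
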